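/- Let n ≥ 1, N ∈ ℕ with N > 2n + 1, j ≥ j' integers, k ∈ ℤⁿ, and let (f_{j',k'})_{k'∈ℤⁿ} be nonnegative reals with only finitely many nonzero. Define F_{j'}(x) = 2^{nj'/2} ∑_{k'} f_{j',k'} · 1_{Q_{j',k'}}(x), where Q_{j',k'} = 2^{−j'}(k' + [0,1)ⁿ). Then for every x ∈ Q_{j,k}, ∑_{k'} 2^{nj'/2} f_{j',k'} (1 + |k' − 2^{j'−j}k|)^{−N} ≲ M(F_{j'})(x), where M is the Hardy–Littlewood maximal operator and the implicit constant depends only on n and N. -/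

import Mathlib

open ENNReal
open MeasureTheory

/-- The axis-parallel cube with lower corner `a` and side length `r` in `ℝⁿ`. -/
def axisCube {n : ℕ} (a : Fin n → ℝ) (r : ℝ) : Set (Fin n → ℝ) :=
  {x | ∀ i, a i ≤ x i ∧ x i < a i + r}

/-- The Hardy–Littlewood maximal function (over axis-parallel cubes), with values in `ℝ≥0∞`. -/
noncomputable def maximalCube {n : ℕ} (g : (Fin n → ℝ) → ℝ) (x : Fin n → ℝ) : ℝ≥0∞ :=
  ⨆ (a : Fin n → ℝ) (r : ℝ) (_ : 0 < r) (_ : x ∈ axisCube a r),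
    (volume (axisCube a r))⁻¹ * ∫⁻ y in axisCube a r, ENNReal.ofReal |g y|

/-- The dyadic cube `Q_{j,k} = 2^{-j}(k + [0,1)ⁿ)`. -/
noncomputable def dyadicCube {n : ℕ} (j : ℤ) (k : Fin n → ℤ) : Set (Fin n → ℝ) :=
  axisCube (fun i => (2 : ℝ) ^ (-(j : ℝ)) * (k i : ℝ)) ((2 : ℝ) ^ (-(j : ℝ)))

/-! Sort the indices `k'` into shells `m - 1 ≤ |k' - 2^{j'-j} k| < m` (`m ≥ 1`). Since `x ∈ Q_{j,k}`
and `j' ≤ j`, every cube `Q_{j',k'}` of the `m`-th shell lies in the cube of side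
`2 (m + 1) 2^{-j'}` centred at `x`, so the coefficient mass of that shell is at most
`(2 (m + 1))ⁿ` times the average of `|F|` over this cube, hence at most `(2 (m + 1))ⁿ M F(x)`.
The weight on the `m`-th shell is at most `m^{-N}`, and `∑ m^{-N} (2 (m + 1))ⁿ ≤ 2 · 4ⁿ`
because `N ≥ n + 2`. -/

lemma axisCube_eq_pi {n : ℕ} (a : Fin n → ℝ) (r : ℝ) :
    axisCube a r = Set.univ.pi fun i => Set.Ico (a i) (a i + r) := by
  ext x
  simp [axisCube]

lemma measurableSet_axisCube {n : ℕ} (a : Fin n → ℝ) (r : ℝ) :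
    MeasurableSet (axisCube a r) := by
  rw [axisCube_eq_pi]
  exact MeasurableSet.univ_pi fun _ => measurableSet_Ico

lemma volume_axisCube {n : ℕ} (a : Fin n → ℝ) (r : ℝ) :
    volume (axisCube a r) = ENNReal.ofReal r ^ n := by
  simp [axisCube_eq_pi, volume_pi_pi, Real.volume_Ico]

lemma self_mem_axisCube_sub {n : ℕ} (x : Fin n → ℝ) {h : ℝ} (hh : 0 < h) :
    x ∈ axisCube (fun i => x i - h) (2 * h) :=
  fun _ => ⟨by linarith, by linarith⟩

lemma lintegral_axisCube_le_mul_maximalCube {n : ℕ} (g : (Fin n → ℝ) → ℝ) {x a : Fin n → ℝ}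
    {r : ℝ} (hr : 0 < r) (hx : x ∈ axisCube a r) :
    ∫⁻ y in axisCube a r, ENNReal.ofReal |g y| ≤ ENNReal.ofReal r ^ n * maximalCube g x := by
  have hmax : (volume (axisCube a r))⁻¹ * ∫⁻ y in axisCube a r, ENNReal.ofReal |g y|
      ≤ maximalCube g x :=
    le_iSup_of_le a <| le_iSup_of_le r <| le_iSup_of_le hr <| le_iSup_of_le hx le_rfl
  rw [volume_axisCube, ← ENNReal.div_eq_inv_mul, ENNReal.div_le_iff (by simp [hr]) (by simp)] at hmax
  rwa [mul_comm]

lemma sum_mul_measure_le_setLIntegral {α ι : Type*} [MeasurableSpace α] (μ : Measure α)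
    (t : Finset ι) {Q : ι → Set α} (hQ : ∀ i, MeasurableSet (Q i)) {B : Set α}
    (hQB : ∀ i ∈ t, Q i ⊆ B) (a : ι → ℝ≥0∞) {g : α → ℝ≥0∞}
    (hg : ∀ y, ∑ i ∈ t, (Q i).indicator (fun _ => a i) y ≤ g y) :
    ∑ i ∈ t, a i * μ (Q i) ≤ ∫⁻ y in B, g y ∂μ :=
  calc ∑ i ∈ t, a i * μ (Q i) = ∑ i ∈ t, ∫⁻ y in B, (Q i).indicator (fun _ => a i) y ∂μ := by
        refine Finset.sum_congr rfl fun i hi => ?_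
        rw [lintegral_indicator_const (hQ i), Measure.restrict_apply (hQ i),
          Set.inter_eq_left.mpr (hQB i hi)]
    _ = ∫⁻ y in B, ∑ i ∈ t, (Q i).indicator (fun _ => a i) y ∂μ :=
        (lintegral_finsetSum _ fun i _ => measurable_const.indicator (hQ i)).symm
    _ ≤ ∫⁻ y in B, g y ∂μ := lintegral_mono hg

lemma axisCube_subset_axisCube_of_abs_sub_le {n : ℕ} {r R : ℝ} {p q x : Fin n → ℝ}
    (hx : x ∈ axisCube (fun i => r * p i) r) (hpq : ∀ i, |q i - p i| ≤ R) :
    axisCube (fun i => r * q i) r ⊆ axisCube (fun i => x i - r * (R + 1)) (2 * (r * (R + 1))) := by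
  intro y hy i
  obtain ⟨hx₁, hx₂⟩ := hx i
  obtain ⟨hy₁, hy₂⟩ := hy i
  obtain ⟨hqp₁, hqp₂⟩ := abs_le.mp (hpq i)
  have hr : 0 < r := by linarith
  constructor <;> nlinarith

lemma dyadicCube_subset_axisCube {n : ℕ} {j j' : ℤ} (hjj' : j' ≤ j) (k : Fin n → ℤ) :
    dyadicCube j k ⊆ axisCube (fun i => (2 : ℝ) ^ (-(j' : ℝ)) * ((2 : ℝ) ^ ((j' : ℝ) - j) * k i))
      ((2 : ℝ) ^ (-(j' : ℝ))) := by
  intro x hx i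
  obtain ⟨hx₁, hx₂⟩ := hx i
  have hscale : (2 : ℝ) ^ (-(j : ℝ)) = (2 : ℝ) ^ (-(j' : ℝ)) * (2 : ℝ) ^ ((j' : ℝ) - j) := by
    rw [← Real.rpow_add two_pos]; ring_nf
  have hle : (2 : ℝ) ^ ((j' : ℝ) - j) ≤ 1 :=
    Real.rpow_le_one_of_one_le_of_nonpos one_le_two (by simpa using hjj')
  have hpos : 0 < (2 : ℝ) ^ (-(j' : ℝ)) := by positivity
  rw [hscale] at hx₁ hx₂
  constructor
  · linarith
  · nlinarith

lemma sum_le_mul_maximalCube_of_abs_sub_le {n : ℕ} {j j' : ℤ} (hjj' : j' ≤ j)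
    {k : Fin n → ℤ} {x : Fin n → ℝ} (hx : x ∈ dyadicCube j k) (t : Finset (Fin n → ℤ))
    (a : (Fin n → ℤ) → ℝ≥0∞) {F : (Fin n → ℝ) → ℝ}
    (hF : ∀ y, ∑ k' ∈ t, (dyadicCube j' k').indicator (fun _ => a k') y ≤ ENNReal.ofReal |F y|)
    {R : ℝ} (hR : 0 ≤ R) (ht : ∀ k' ∈ t, ∀ i, |(k' i : ℝ) - (2 : ℝ) ^ ((j' : ℝ) - j) * k i| ≤ R) :
    ∑ k' ∈ t, a k' ≤ ENNReal.ofReal ((2 * (R + 1)) ^ n) * maximalCube F x := by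
  set r : ℝ := (2 : ℝ) ^ (-(j' : ℝ))
  have hr : 0 < r := by positivity
  have hh : 0 < r * (R + 1) := by positivity
  have hxB := self_mem_axisCube_sub x hh
  have hQB : ∀ k' ∈ t,
      dyadicCube j' k' ⊆ axisCube (fun i => x i - r * (R + 1)) (2 * (r * (R + 1))) :=
    fun k' hk' => axisCube_subset_axisCube_of_abs_sub_le (dyadicCube_subset_axisCube hjj' k hx)
      (ht k' hk')
  have hint := sum_mul_measure_le_setLIntegral volume t (Q := dyadicCube j')
    (fun _ => measurableSet_axisCube _ _) hQB a hF
  have hmax := lintegral_axisCube_le_mul_maximalCube F (by positivity) hxB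
  have hside : ENNReal.ofReal (2 * (r * (R + 1))) ^ n
      = ENNReal.ofReal r ^ n * ENNReal.ofReal ((2 * (R + 1)) ^ n) := by
    rw [← ENNReal.ofReal_pow hr.le, ← ENNReal.ofReal_pow (by positivity), ← ENNReal.ofReal_mul
      (by positivity), ← mul_pow]
    ring_nf
  have hvol (k' : Fin n → ℤ) : volume (dyadicCube j' k') = ENNReal.ofReal r ^ n :=
    volume_axisCube _ _
  simp only [hvol, ← Finset.sum_mul] at hint
  rw [hside, mul_assoc] at hmax
  rw [← ENNReal.mul_le_mul_iff_right (a := ENNReal.ofReal r ^ n) (by simp [hr]) (by simp),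
    mul_comm]
  exact hint.trans hmax

lemma sum_mul_le_sum_image_mul {ι κ : Type*} [DecidableEq κ] (s : Finset ι) (φ : ι → κ)
    (w : κ → ℝ≥0∞) (a : ι → ℝ≥0∞) (b : κ → ℝ≥0∞)
    (hb : ∀ m ∈ s.image φ, ∑ i ∈ s with φ i = m, a i ≤ b m) :
    ∑ i ∈ s, w (φ i) * a i ≤ ∑ m ∈ s.image φ, w m * b m := by
  rw [← Finset.sum_fiberwise_of_maps_to fun i hi => Finset.mem_image_of_mem φ hi]
  gcongr with m hm
  calc ∑ i ∈ s with φ i = m, w (φ i) * a i = w m * ∑ i ∈ s with φ i = m, a i := by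
        rw [Finset.mul_sum]
        exact Finset.sum_congr rfl fun i hi => by rw [(Finset.mem_filter.mp hi).2]
    _ ≤ w m * b m := by gcongr; exact hb m hm

lemma sum_inv_pow_mul_pow_le {n N : ℕ} (hN : n + 2 ≤ N) (T : Finset ℕ) (hT : ∀ m ∈ T, 1 ≤ m) :
    ∑ m ∈ T, ((m : ℝ) ^ N)⁻¹ * (2 * (m + 1)) ^ n ≤ 2 * 4 ^ n := by
  have hterm : ∀ m ∈ T, ((m : ℝ) ^ N)⁻¹ * (2 * (m + 1)) ^ n ≤ 4 ^ n * ((m : ℝ) ^ 2)⁻¹ := by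
    intro m hm
    have h1 : (1 : ℝ) ≤ m := by exact_mod_cast hT m hm
    calc ((m : ℝ) ^ N)⁻¹ * (2 * (m + 1)) ^ n ≤ ((m : ℝ) ^ (n + 2))⁻¹ * (4 * m) ^ n :=
          mul_le_mul (inv_anti₀ (by positivity) (pow_le_pow_right₀ h1 hN))
            (pow_le_pow_left₀ (by positivity) (by linarith) n) (by positivity) (by positivity)
      _ = 4 ^ n * ((m : ℝ) ^ 2)⁻¹ := by
          have : (m : ℝ) ≠ 0 := by positivity
          field_simp
          ring
  have hsub : T ⊆ Finset.Ioo 0 (T.sup id + 1) := fun m hm =>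
    Finset.mem_Ioo.mpr ⟨hT m hm, Nat.lt_succ_of_le (Finset.le_sup (f := id) hm)⟩
  calc ∑ m ∈ T, ((m : ℝ) ^ N)⁻¹ * (2 * (m + 1)) ^ n ≤ ∑ m ∈ T, 4 ^ n * ((m : ℝ) ^ 2)⁻¹ :=
        Finset.sum_le_sum hterm
    _ ≤ 4 ^ n * ∑ m ∈ Finset.Ioo 0 (T.sup id + 1), ((m : ℝ) ^ 2)⁻¹ := by
        rw [← Finset.mul_sum]
        gcongr
    _ ≤ 4 ^ n * 2 := by
        gcongr
        simpa using sum_Ioo_inv_sq_le (α := ℝ) 0 (T.sup id + 1)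
    _ = 2 * 4 ^ n := mul_comm _ _

lemma sum_rpow_neg_mul_le_of_ball_bound {ι : Type*} (s : Finset ι) (a : ι → ℝ≥0∞) {d : ι → ℝ}
    (hd : ∀ i, 0 ≤ d i) {n N : ℕ} (hN : n + 2 ≤ N) {M : ℝ≥0∞}
    (hball : ∀ m : ℕ, ∑ i ∈ s with d i < m, a i ≤ ENNReal.ofReal ((2 * (m + 1)) ^ n) * M) :
    ∑ i ∈ s, ENNReal.ofReal ((1 + d i) ^ (-(N : ℝ))) * a i ≤ ENNReal.ofReal (2 * 4 ^ n) * M := by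
  set φ : ι → ℕ := fun i => ⌊d i⌋₊ + 1
  have hweight (i : ι) : (1 + d i) ^ (-(N : ℝ)) ≤ ((φ i : ℝ) ^ N)⁻¹ := by
    have hφ : (φ i : ℝ) ≤ 1 + d i := by
      have := Nat.floor_le (hd i); push_cast [φ]; linarith
    rw [Real.rpow_neg (by linarith [hd i]), Real.rpow_natCast]
    exact inv_anti₀ (by positivity) (pow_le_pow_left₀ (by positivity) hφ N)
  have hshell (m : ℕ) : ∑ i ∈ s with φ i = m, a i ≤ ENNReal.ofReal ((2 * (m + 1)) ^ n) * M := by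
    refine le_trans (Finset.sum_le_sum_of_subset fun i hi => ?_) (hball m)
    obtain ⟨his, rfl⟩ := Finset.mem_filter.mp hi
    exact Finset.mem_filter.mpr ⟨his, by push_cast [φ]; exact Nat.lt_floor_add_one (d i)⟩
  calc ∑ i ∈ s, ENNReal.ofReal ((1 + d i) ^ (-(N : ℝ))) * a i
      ≤ ∑ i ∈ s, ENNReal.ofReal (((φ i : ℝ) ^ N)⁻¹) * a i := by gcongr with i; exact hweight i
    _ ≤ ∑ m ∈ s.image φ, ENNReal.ofReal (((m : ℝ) ^ N)⁻¹) *
          (ENNReal.ofReal ((2 * (m + 1)) ^ n) * M) :=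
        sum_mul_le_sum_image_mul s φ _ a _ fun m _ => hshell m
    _ = ENNReal.ofReal (∑ m ∈ s.image φ, ((m : ℝ) ^ N)⁻¹ * (2 * (m + 1)) ^ n) * M := by
        rw [ENNReal.ofReal_sum_of_nonneg fun _ _ => by positivity, Finset.sum_mul]
        refine Finset.sum_congr rfl fun m _ => ?_
        rw [ENNReal.ofReal_mul (by positivity), mul_assoc]
    _ ≤ ENNReal.ofReal (2 * 4 ^ n) * M := by
        gcongr
        refine sum_inv_pow_mul_pow_le hN _ fun m hm => ?_
        obtain ⟨i, -, rfl⟩ := Finset.mem_image.mp hm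
        exact Nat.le_add_left 1 _

lemma sum_indicator_ofReal_le_ofReal_abs_sum {α ι : Type*} {s t : Finset ι} (hts : t ⊆ s)
    {b : ι → ℝ} (hb : ∀ i, 0 ≤ b i) (Q : ι → Set α) (y : α) :
    ∑ i ∈ t, (Q i).indicator (fun _ => ENNReal.ofReal (b i)) y
      ≤ ENNReal.ofReal |∑ i ∈ s, b i * (Q i).indicator (fun _ => (1 : ℝ)) y| := by
  have hterm (i : ι) : 0 ≤ b i * (Q i).indicator (fun _ => (1 : ℝ)) y :=
    mul_nonneg (hb i) (Set.indicator_nonneg (fun _ _ => zero_le_one) y)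
  calc ∑ i ∈ t, (Q i).indicator (fun _ => ENNReal.ofReal (b i)) y
      = ENNReal.ofReal (∑ i ∈ t, b i * (Q i).indicator (fun _ => (1 : ℝ)) y) := by
        rw [ENNReal.ofReal_sum_of_nonneg fun i _ => hterm i]
        refine Finset.sum_congr rfl fun i _ => ?_
        by_cases hy : y ∈ Q i <;> simp [hy]
    _ ≤ ENNReal.ofReal (∑ i ∈ s, b i * (Q i).indicator (fun _ => (1 : ℝ)) y) :=
        ENNReal.ofReal_le_ofReal (Finset.sum_le_sum_of_subset_of_nonneg hts fun i _ _ => hterm i)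
    _ ≤ _ := ENNReal.ofReal_le_ofReal (le_abs_self _)

theorem maximal_wavelet_bound_general (n : ℕ) (N : ℕ) (hN : 2 * n + 1 < N) :
    ∃ C : ℝ, 0 < C ∧ ∀ (j j' : ℤ), j' ≤ j → ∀ (k : Fin n → ℤ)
      (f : (Fin n → ℤ) → ℝ), (∀ k', 0 ≤ f k') → (Function.support f).Finite →
      ∀ F : (Fin n → ℝ) → ℝ,
        (∀ x, F x = (2 : ℝ) ^ ((n : ℝ) * (j' : ℝ) / 2) *
          ∑' k' : Fin n → ℤ, f k' * (dyadicCube j' k').indicator (fun _ => (1 : ℝ)) x) →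
      ∀ x ∈ dyadicCube j k,
        ENNReal.ofReal (∑' k' : Fin n → ℤ,
            (2 : ℝ) ^ ((n : ℝ) * (j' : ℝ) / 2) * f k' *
              (1 + Real.sqrt (∑ i, ((k' i : ℝ) -
                (2 : ℝ) ^ ((j' : ℝ) - (j : ℝ)) * (k i : ℝ)) ^ 2)) ^ (-(N : ℝ)))
          ≤ ENNReal.ofReal C * maximalCube F x := by
  refine ⟨2 * 4 ^ n, by positivity, ?_⟩
  intro j j' hjj' k f hf0 hfin F hF x hx
  set c : ℝ := (2 : ℝ) ^ ((n : ℝ) * (j' : ℝ) / 2)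
  set d : (Fin n → ℤ) → ℝ := fun k' =>
    Real.sqrt (∑ i, ((k' i : ℝ) - (2 : ℝ) ^ ((j' : ℝ) - (j : ℝ)) * (k i : ℝ)) ^ 2)
  set s := hfin.toFinset
  have hs : ∀ k' ∉ s, f k' = 0 := by simp [s]
  have hcf (k' : Fin n → ℤ) : 0 ≤ c * f k' := mul_nonneg (by positivity) (hf0 k')
  have hFs (y : Fin n → ℝ) :
      F y = ∑ k' ∈ s, c * f k' * (dyadicCube j' k').indicator (fun _ => (1 : ℝ)) y := by
    rw [hF, tsum_eq_sum (s := s) fun k' hk' => by simp [hs k' hk'], Finset.mul_sum]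
    simp only [mul_assoc]
  have hLHS : ∑' k', c * f k' * (1 + d k') ^ (-(N : ℝ))
      = ∑ k' ∈ s, c * f k' * (1 + d k') ^ (-(N : ℝ)) :=
    tsum_eq_sum fun k' hk' => by simp [hs k' hk']
  have hd (k' : Fin n → ℤ) : 0 ≤ d k' := Real.sqrt_nonneg _
  rw [hLHS, ENNReal.ofReal_sum_of_nonneg fun k' _ =>
    mul_nonneg (hcf k') (Real.rpow_nonneg (by linarith [hd k']) _)]
  simp only [ENNReal.ofReal_mul (hcf _), mul_comm (ENNReal.ofReal (c * f _))]
  refine sum_rpow_neg_mul_le_of_ball_bound s _ hd (by omega) fun m => ?_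
  refine sum_le_mul_maximalCube_of_abs_sub_le hjj' hx _ _
    (fun y => hFs y ▸ sum_indicator_ofReal_le_ofReal_abs_sum (Finset.filter_subset _ s) hcf _ y)
    m.cast_nonneg fun k' hk' i => ?_
  have hcoord := Finset.single_le_sum
    (f := fun i => ((k' i : ℝ) - (2 : ℝ) ^ ((j' : ℝ) - (j : ℝ)) * (k i : ℝ)) ^ 2)
    (fun i _ => sq_nonneg _) (Finset.mem_univ i)
  exact (Real.abs_le_sqrt hcoord).trans (Finset.mem_filter.mp hk').2.le

/-- Lemma on maximal functions: for `N > 2n + 1`, `j' ≤ j`, `k ∈ ℤⁿ`, nonnegative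
coefficients `f` with finite support, and
`F(x) = 2^{nj'/2} ∑_{k'} f_{k'} 𝟙_{Q_{j',k'}}(x)`, for every `x ∈ Q_{j,k}` one has
`∑_{k'} 2^{nj'/2} f_{k'} (1 + |k' - 2^{j'-j} k|)^{-N} ≤ C · M(F)(x)`,
where `C` depends only on `n` and `N`. -/
theorem maximal_wavelet_bound (n : ℕ) (hn : 1 ≤ n) (N : ℕ) (hN : 2 * n + 1 < N) :
    ∃ C : ℝ, 0 < C ∧ ∀ (j j' : ℤ), j' ≤ j → ∀ (k : Fin n → ℤ)
      (f : (Fin n → ℤ) → ℝ), (∀ k', 0 ≤ f k') → (Function.support f).Finite →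
      ∀ F : (Fin n → ℝ) → ℝ,
        (∀ x, F x = (2 : ℝ) ^ ((n : ℝ) * (j' : ℝ) / 2) *
          ∑' k' : Fin n → ℤ, f k' * (dyadicCube j' k').indicator (fun _ => (1 : ℝ)) x) →
      ∀ x ∈ dyadicCube j k,
        ENNReal.ofReal (∑' k' : Fin n → ℤ,
            (2 : ℝ) ^ ((n : ℝ) * (j' : ℝ) / 2) * f k' *
              (1 + Real.sqrt (∑ i, ((k' i : ℝ) -
                (2 : ℝ) ^ ((j' : ℝ) - (j : ℝ)) * (k i : ℝ)) ^ 2)) ^ (-(N : ℝ)))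
          ≤ ENNReal.ofReal C * maximalCube F x :=
  maximal_wavelet_bound_general n N hN
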